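/- Every connected P4-free graph on at least 2 vertices has edge-connectivity equal to its minimum degree. -/

import Mathlib

open SimpleGraph

/-- The edge-connectivity of `G`: the minimum number of edges whose deletion disconnects `G`. -/
noncomputable def edgeConn {V : Type*} [Fintype V] (G : SimpleGraph V) : ℕ :=
  sInf {k | ∃ F : Finset (Sym2 V), ↑F ⊆ G.edgeSet ∧ F.card = k ∧ ¬ (G.deleteEdges ↑F).Connected}

/-- The minimum degree of `G`. -/
noncomputable def minDeg {V : Type*} [Fintype V] (G : SimpleGraph V) : ℕ :=
  sInf {d | ∃ v : V, d = (G.neighborSet v).ncard}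

/-!
In a connected `P₄`-free graph any two vertices are at distance at most 2: the first four
vertices of a geodesic of length 3 would induce a `P₄`. Let `F` be a minimum disconnecting edge
set and `S` a component of `G - F`. A vertex `a ∈ S` without neighbours outside `S` and a vertex
`b ∉ S` without neighbours in `S` would be at distance at least 3, so on one side of the cut every
vertex has a neighbour across, and for a vertex `v` on that side the neighbours of `v` inject
into `F`, so `deg v ≤ |F|`. The edges at a vertex of minimum degree give the reverse inequality.
-/

namespace SimpleGraph

variable {V : Type*} (G : SimpleGraph V)

theorem nonempty_pathGraph_four_embedding {a b c d : V} (hab : G.Adj a b) (hbc : G.Adj b c)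
    (hcd : G.Adj c d) (hac : ¬ G.Adj a c) (hbd : ¬ G.Adj b d) (had : ¬ G.Adj a d) :
    Nonempty (pathGraph 4 ↪g G) := by
  have hnac : a ≠ c := by rintro rfl; exact had hcd
  have hnbd : b ≠ d := by rintro rfl; exact had hab
  have hnad : a ≠ d := by rintro rfl; exact hac hcd.symm
  refine ⟨⟨⟨![a, b, c, d], fun i j hij => ?_⟩, fun {i j} => ?_⟩⟩
  · fin_cases i <;> fin_cases j <;> simp_all [hab.ne, hbc.ne, hcd.ne, eq_comm]
  · change G.Adj (![a, b, c, d] i) (![a, b, c, d] j) ↔ _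
    fin_cases i <;> fin_cases j <;> simp_all [pathGraph_adj, adj_comm]

theorem nonempty_pathGraph_four_embedding_of_dist_eq {a b c d t : V} (hab : G.Adj a b)
    (hbc : G.Adj b c) (hcd : G.Adj c d) (q : G.Walk d t) (hdist : G.dist a t = q.length + 3) :
    Nonempty (pathGraph 4 ↪g G) := by
  refine G.nonempty_pathGraph_four_embedding hab hbc hcd (fun hac => ?_) (fun hbd => ?_)
    (fun had => ?_)
  · have := G.dist_le (.cons hac (.cons hcd q))
    simp only [Walk.length_cons] at this
    omega
  · have := G.dist_le (.cons hab (.cons hbd q))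
    simp only [Walk.length_cons] at this
    omega
  · have := G.dist_le (.cons had q)
    simp only [Walk.length_cons] at this
    omega

variable {G} in
theorem Connected.edist_le_two_of_isEmpty_pathGraph_embedding (hG : G.Connected)
    (hfree : IsEmpty (pathGraph 4 ↪g G)) (u v : V) : G.edist u v ≤ 2 := by
  by_contra! h
  obtain ⟨p, hp⟩ := hG.exists_walk_length_eq_dist u v
  rw [← (hG.preconnected u v).coe_dist_eq_edist] at h
  match p, hp with
  | .cons hab (.cons hbc (.cons hcd q)), hp =>
    exact hfree.false (G.nonempty_pathGraph_four_embedding_of_dist_eq hab hbc hcd q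
      (by rw [← hp]; rfl)).some
  | .nil, hp | .cons _ .nil, hp | .cons _ (.cons _ .nil), hp =>
    simp only [Walk.length_cons, Walk.length_nil] at hp
    norm_cast at h
    omega

theorem forall_exists_adj_compl_or_of_edist_le_two (hdiam : ∀ u v, G.edist u v ≤ 2)
    (S : Set V) :
    (∀ x ∈ S, ∃ y ∉ S, G.Adj x y) ∨ (∀ y ∉ S, ∃ x ∈ S, G.Adj y x) := by
  by_contra! ⟨⟨a, ha, hna⟩, ⟨b, hb, hnb⟩⟩
  refine not_lt_of_ge (hdiam a b) (two_lt_edist_iff.mpr ⟨?_, ?_, ?_⟩)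
  · rintro rfl; exact hb ha
  · exact hna b hb
  · ext c
    simp only [mem_commonNeighbors, Set.mem_empty_iff_false, iff_false, not_and]
    intro hac hbc
    by_cases hc : c ∈ S
    · exact hnb c hc hbc
    · exact hna c hc hac

theorem not_connected_deleteEdges_incidenceSet {u v : V} (huv : u ≠ v) :
    ¬ (G.deleteEdges (G.incidenceSet v)).Connected := by
  intro hconn
  obtain ⟨p⟩ := hconn.preconnected v u
  cases p with
  | nil => exact huv rfl
  | cons h _ =>
    obtain ⟨hadj, hnot⟩ := deleteEdges_adj.mp h
    exact hnot (G.mk'_mem_incidenceSet_left_iff.mpr hadj)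

section Finite

variable [Fintype V]

theorem degree_le_card_of_forall_exists_adj_compl [DecidableRel G.Adj] {S : Set V}
    {F : Finset (Sym2 V)} (hcut : ∀ x ∈ S, ∀ y ∉ S, G.Adj x y → s(x, y) ∈ F)
    (hout : ∀ x ∈ S, ∃ y ∉ S, G.Adj x y) {v : V} (hv : v ∈ S) :
    G.degree v ≤ F.card := by
  classical
  choose! g hgS hgAdj using hout
  -- A neighbour `y` inside `S` is charged the edge it uses to leave `S`, one outside the edge `vy`.
  let f : V → Sym2 V := fun y => if y ∈ S then s(y, g y) else s(v, y)
  refine Finset.card_le_card_of_injOn f (fun y hy => ?_) (fun y hy y' hy' hyy' => ?_)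
  · rw [Finset.mem_coe, mem_neighborFinset] at hy
    rw [Finset.mem_coe]
    by_cases hyS : y ∈ S
    · simpa [f, hyS] using hcut y hyS (g y) (hgS y hyS) (hgAdj y hyS)
    · simpa [f, hyS] using hcut v hv y hyS hy
  · rw [Finset.mem_coe, mem_neighborFinset] at hy hy'
    by_cases hyS : y ∈ S <;> by_cases hy'S : y' ∈ S <;>
      simp only [f, hyS, hy'S, if_true, if_false, Sym2.eq_iff] at hyy' <;>
      grind [Adj.ne']

theorem minDegree_le_card_of_not_preconnected_deleteEdges [DecidableRel G.Adj]
    (hdiam : ∀ u v, G.edist u v ≤ 2) {F : Finset (Sym2 V)}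
    (hF : ¬ (G.deleteEdges ↑F).Preconnected) : G.minDegree ≤ F.card := by
  obtain ⟨u, w, huw⟩ : ∃ u w, ¬ (G.deleteEdges ↑F).Reachable u w := by
    simpa [Preconnected] using hF
  let S : Set V := {x | (G.deleteEdges ↑F).Reachable u x}
  have hcut : ∀ x ∈ S, ∀ y ∉ S, G.Adj x y → s(x, y) ∈ F := fun x hx y hy hxy => by
    by_contra hxyF
    exact hy (hx.trans (deleteEdges_adj.mpr ⟨hxy, hxyF⟩).reachable)
  rcases G.forall_exists_adj_compl_or_of_edist_le_two hdiam S with hout | hout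
  · exact (G.minDegree_le_degree u).trans
      (G.degree_le_card_of_forall_exists_adj_compl hcut hout (Reachable.refl u))
  · refine (G.minDegree_le_degree w).trans
      (G.degree_le_card_of_forall_exists_adj_compl (S := Sᶜ) (fun x hx y hy hxy => ?_)
        (by simpa using hout) huw)
    rw [Sym2.eq_swap]
    exact hcut y (not_not.mp hy) x hx hxy.symm

theorem ncard_neighborSet_eq_degree [DecidableRel G.Adj] (v : V) :
    (G.neighborSet v).ncard = G.degree v := by
  rw [← card_neighborFinset_eq_degree, Set.ncard_eq_toFinset_card']
  rfl

theorem minDeg_eq_minDegree [DecidableRel G.Adj] [Nonempty V] : minDeg G = G.minDegree := by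
  simp_rw [minDeg, ncard_neighborSet_eq_degree]
  obtain ⟨v, hv⟩ := G.exists_minimal_degree_vertex
  refine le_antisymm (Nat.sInf_le ⟨v, hv⟩) (le_csInf ⟨_, v, rfl⟩ ?_)
  rintro d ⟨u, rfl⟩
  exact G.minDegree_le_degree u

theorem exists_disconnecting_card_eq_degree [DecidableRel G.Adj] {u v : V} (huv : u ≠ v) :
    ∃ F : Finset (Sym2 V),
      ↑F ⊆ G.edgeSet ∧ F.card = G.degree v ∧ ¬ (G.deleteEdges ↑F).Connected := by
  classical
  exact ⟨G.incidenceFinset v, by simpa using G.incidenceSet_subset v,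
    G.card_incidenceFinset_eq_degree v,
    by simpa using G.not_connected_deleteEdges_incidenceSet huv⟩

theorem edgeConn_le_degree [DecidableRel G.Adj] {u v : V} (huv : u ≠ v) :
    edgeConn G ≤ G.degree v :=
  Nat.sInf_le (G.exists_disconnecting_card_eq_degree huv)

theorem exists_disconnecting_card_eq_edgeConn {u v : V} (huv : u ≠ v) :
    ∃ F : Finset (Sym2 V),
      ↑F ⊆ G.edgeSet ∧ F.card = edgeConn G ∧ ¬ (G.deleteEdges ↑F).Connected := by
  classical
  exact (Nat.sInf_mem ⟨_, G.exists_disconnecting_card_eq_degree huv⟩ : edgeConn G ∈ _)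

end Finite

end SimpleGraph

/-- Every connected `P₄`-free graph on at least 2 vertices has edge-connectivity equal to
its minimum degree. -/
theorem p4_free_edgeConn_eq_minDeg {V : Type*} [Fintype V] (G : SimpleGraph V)
    (hG : G.Connected) (hcard : 2 ≤ Fintype.card V)
    (hfree : IsEmpty (pathGraph 4 ↪g G)) :
    edgeConn G = minDeg G := by
  classical
  have hdiam := hG.edist_le_two_of_isEmpty_pathGraph_embedding hfree
  have := hG.nonempty
  obtain ⟨v, hv⟩ := G.exists_minimal_degree_vertex
  obtain ⟨u, huv⟩ := Fintype.exists_ne_of_one_lt_card hcard v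
  rw [G.minDeg_eq_minDegree]
  refine le_antisymm (hv ▸ G.edgeConn_le_degree huv) ?_
  obtain ⟨F, -, hFcard, hF⟩ := G.exists_disconnecting_card_eq_edgeConn huv
  exact hFcard ▸ G.minDegree_le_card_of_not_preconnected_deleteEdges hdiam fun h => hF ⟨h⟩
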